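/- Relative consistency (intuitionistic): for a set of formulas Γ containing no occurrence of ∀, Γ ⊢_NK ⊥ if and only if Γ ⊢_NJ ⊥. -/

import Mathlib

/-- First-order terms: variables (de Bruijn style indices for bound variables
are merged with free variable indices) and function symbols with arguments. -/
inductive Term where
  | var : ℕ → Term
  | fn : ℕ → (ℕ → Term) → Term

/-- Lift (shift by one) all variables ≥ k. -/
def Term.lift (k : ℕ) : Term → Term
  | .var n => .var (if n < k then n else n + 1)
  | .fn f a => .fn f (fun i => (a i).lift k)

/-- Capture-avoiding substitution of the term `s` for variable `k` (de Bruijn). -/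
def Term.subst (k : ℕ) (s : Term) : Term → Term
  | .var n => if n < k then .var n else if n = k then s else .var (n - 1)
  | .fn f a => .fn f (fun i => Term.subst k s (a i))

/-- Free variables of a term. -/
def Term.fv : Term → Set ℕ
  | .var n => {n}
  | .fn _ a => ⋃ i, (a i).fv

/-- First-order formulas with primitive negation, de Bruijn binders. -/
inductive Formula where
  | pred : ℕ → (ℕ → Term) → Formula
  | bot : Formula
  | top : Formula
  | neg : Formula → Formula
  | conj : Formula → Formula → Formula
  | disj : Formula → Formula → Formula
  | impl : Formula → Formula → Formula
  | all : Formula → Formula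
  | ex : Formula → Formula

def Formula.lift (k : ℕ) : Formula → Formula
  | .pred r a => .pred r (fun i => (a i).lift k)
  | .bot => .bot
  | .top => .top
  | .neg A => .neg (A.lift k)
  | .conj A B => .conj (A.lift k) (B.lift k)
  | .disj A B => .disj (A.lift k) (B.lift k)
  | .impl A B => .impl (A.lift k) (B.lift k)
  | .all A => .all (A.lift (k + 1))
  | .ex A => .ex (A.lift (k + 1))

/-- Capture-avoiding substitution of term `s` for variable `k` in a formula. -/
def Formula.subst (k : ℕ) (s : Term) : Formula → Formula
  | .pred r a => .pred r (fun i => Term.subst k s (a i))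
  | .bot => .bot
  | .top => .top
  | .neg A => .neg (A.subst k s)
  | .conj A B => .conj (A.subst k s) (B.subst k s)
  | .disj A B => .disj (A.subst k s) (B.subst k s)
  | .impl A B => .impl (A.subst k s) (B.subst k s)
  | .all A => .all (A.subst (k + 1) (s.lift 0))
  | .ex A => .ex (A.subst (k + 1) (s.lift 0))

/-- Free variables of a formula. -/
def Formula.fv : Formula → Set ℕ
  | .pred _ a => ⋃ i, (a i).fv
  | .bot => ∅
  | .top => ∅
  | .neg A => A.fv
  | .conj A B => A.fv ∪ B.fv
  | .disj A B => A.fv ∪ B.fv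
  | .impl A B => A.fv ∪ B.fv
  | .all A => {n | n + 1 ∈ A.fv}
  | .ex A => {n | n + 1 ∈ A.fv}

/-- Object-level biconditional, as a defined connective. -/
def Formula.fIff (A B : Formula) : Formula := .conj (.impl A B) (.impl B A)

/-- `A` contains no occurrence of the universal quantifier ∀. -/
def Formula.forallFree : Formula → Prop
  | .pred _ _ => True
  | .bot => True
  | .top => True
  | .neg A => A.forallFree
  | .conj A B => A.forallFree ∧ B.forallFree
  | .disj A B => A.forallFree ∧ B.forallFree
  | .impl A B => A.forallFree ∧ B.forallFree
  | .all _ => False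
  | .ex A => A.forallFree

/-- `A` contains no occurrence of implication →. -/
def Formula.impFree : Formula → Prop
  | .pred _ _ => True
  | .bot => True
  | .top => True
  | .neg A => A.impFree
  | .conj A B => A.impFree ∧ B.impFree
  | .disj A B => A.impFree ∧ B.impFree
  | .impl _ _ => False
  | .all A => A.impFree
  | .ex A => A.impFree

/-- The minimal translation (·)^m. -/
def Formula.mtr : Formula → Formula
  | .pred r a => .pred r a
  | .bot => .bot
  | .top => .top
  | .neg A => .neg A.mtr
  | .conj A B => .conj A.mtr B.mtr
  | .disj A B => .disj A.mtr B.mtr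
  | .impl A B => .disj (.neg A.mtr) B.mtr
  | .all A => .neg (.ex (.neg A.mtr))
  | .ex A => .ex A.mtr

/-- The intuitionistic translation (·)^j. -/
def Formula.jtr : Formula → Formula
  | .pred r a => .pred r a
  | .bot => .bot
  | .top => .top
  | .neg A => .neg A.jtr
  | .conj A B => .conj A.jtr B.jtr
  | .disj A B => .disj A.jtr B.jtr
  | .impl A B => .impl A.jtr B.jtr
  | .all A => .neg (.ex (.neg A.jtr))
  | .ex A => .ex A.jtr

/-- Negative formulas: built from negated atoms, ⊥, ⊤ using only ¬, ∧, →, ∀. -/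
inductive Formula.Negative : Formula → Prop where
  | negAtom : ∀ r a, Formula.Negative (.neg (.pred r a))
  | bot : Formula.Negative .bot
  | top : Formula.Negative .top
  | neg : ∀ {A}, Formula.Negative A → Formula.Negative (.neg A)
  | conj : ∀ {A B}, Formula.Negative A → Formula.Negative B → Formula.Negative (.conj A B)
  | impl : ∀ {A B}, Formula.Negative A → Formula.Negative B → Formula.Negative (.impl A B)
  | all : ∀ {A}, Formula.Negative A → Formula.Negative (.all A)

/-- Natural deduction derivability; the flags `efq`, `raa` tell whether the
ex falso quodlibet and reductio ad absurdum rules are available.  `Deriv efq raa Γ A`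
means `A` is derivable with undischarged assumptions among `Γ`. -/
inductive Deriv (efq raa : Bool) : Set Formula → Formula → Prop where
  | hyp : ∀ {Γ A}, A ∈ Γ → Deriv efq raa Γ A
  | topI : ∀ {Γ}, Deriv efq raa Γ .top
  | negI : ∀ {Γ A}, Deriv efq raa (insert A Γ) .bot → Deriv efq raa Γ (.neg A)
  | negE : ∀ {Γ A}, Deriv efq raa Γ (.neg A) → Deriv efq raa Γ A → Deriv efq raa Γ .bot
  | conjI : ∀ {Γ A B}, Deriv efq raa Γ A → Deriv efq raa Γ B → Deriv efq raa Γ (.conj A B)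
  | conjE1 : ∀ {Γ A B}, Deriv efq raa Γ (.conj A B) → Deriv efq raa Γ A
  | conjE2 : ∀ {Γ A B}, Deriv efq raa Γ (.conj A B) → Deriv efq raa Γ B
  | disjI1 : ∀ {Γ A B}, Deriv efq raa Γ A → Deriv efq raa Γ (.disj A B)
  | disjI2 : ∀ {Γ A B}, Deriv efq raa Γ B → Deriv efq raa Γ (.disj A B)
  | disjE : ∀ {Γ A B C}, Deriv efq raa Γ (.disj A B) → Deriv efq raa (insert A Γ) C →
      Deriv efq raa (insert B Γ) C → Deriv efq raa Γ C
  | implI : ∀ {Γ A B}, Deriv efq raa (insert A Γ) B → Deriv efq raa Γ (.impl A B)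
  | implE : ∀ {Γ A B}, Deriv efq raa Γ (.impl A B) → Deriv efq raa Γ A → Deriv efq raa Γ B
  | allI : ∀ {Γ A}, Deriv efq raa (Formula.lift 0 '' Γ) A → Deriv efq raa Γ (.all A)
  | allE : ∀ {Γ A} (t : Term), Deriv efq raa Γ (.all A) → Deriv efq raa Γ (A.subst 0 t)
  | exI : ∀ {Γ A} (t : Term), Deriv efq raa Γ (A.subst 0 t) → Deriv efq raa Γ (.ex A)
  | exE : ∀ {Γ A C}, Deriv efq raa Γ (.ex A) →
      Deriv efq raa (insert A (Formula.lift 0 '' Γ)) (C.lift 0) → Deriv efq raa Γ C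
  | efqR : ∀ {Γ A}, efq = true → Deriv efq raa Γ .bot → Deriv efq raa Γ A
  | raaR : ∀ {Γ A}, raa = true → Deriv efq raa (insert (.neg A) Γ) .bot → Deriv efq raa Γ A

/-- Minimal natural deduction. -/
def NM : Set Formula → Formula → Prop := Deriv false false
/-- Intuitionistic natural deduction. -/
def NJ : Set Formula → Formula → Prop := Deriv true false
/-- Classical natural deduction (minimal + reductio ad absurdum). -/
def NK : Set Formula → Formula → Prop := Deriv false true

/-! Every NK-derivation `Γ ⊢ A` becomes an NJ-derivation of `¬¬Aʲ` from `Γʲ`, where `(·)ʲ`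
reads `∀` as `¬∃¬`: each rule remains sound under `¬¬` in NJ (for `→`-introduction this
needs ex falso), and reductio ad absurdum becomes an instance of `¬`-introduction. The
translation fixes `∀`-free formulas, and `¬¬⊥` yields `⊥` already in minimal logic, so an
NK-refutation of a `∀`-free `Γ` is an NJ-refutation. Conversely ex falso is the special case
of reductio ad absurdum that discharges nothing. -/

abbrev Formula.dneg (A : Formula) : Formula := .neg (.neg A)

namespace Formula

theorem jtr_lift (A : Formula) (k : ℕ) : (A.lift k).jtr = A.jtr.lift k := by
  induction A generalizing k <;> simp [lift, jtr, *]

theorem jtr_subst (A : Formula) (k : ℕ) (s : Term) : (A.subst k s).jtr = A.jtr.subst k s := by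
  induction A generalizing k s <;> simp [subst, jtr, *]

theorem image_jtr_image_lift (Γ : Set Formula) : jtr '' (lift 0 '' Γ) = lift 0 '' (jtr '' Γ) := by
  simp only [Set.image_image, jtr_lift]

theorem jtr_eq_self {A : Formula} (h : A.forallFree) : A.jtr = A := by
  induction A <;> simp_all [forallFree, jtr]

theorem image_jtr_eq_self {Γ : Set Formula} (h : ∀ B ∈ Γ, B.forallFree) : jtr '' Γ = Γ := by
  rw [Set.image_congr fun B hB => jtr_eq_self (h B hB), Set.image_id']

end Formula

namespace Deriv

variable {e r : Bool} {Γ Δ : Set Formula} {A B C : Formula}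

theorem mono (d : Deriv e r Γ A) (h : Γ ⊆ Δ) : Deriv e r Δ A := by
  induction d generalizing Δ with
  | hyp hA => exact hyp (h hA)
  | topI => exact topI
  | negI _ ih => exact negI (ih (Set.insert_subset_insert h))
  | negE _ _ ih₁ ih₂ => exact negE (ih₁ h) (ih₂ h)
  | conjI _ _ ih₁ ih₂ => exact conjI (ih₁ h) (ih₂ h)
  | conjE1 _ ih => exact conjE1 (ih h)
  | conjE2 _ ih => exact conjE2 (ih h)
  | disjI1 _ ih => exact disjI1 (ih h)
  | disjI2 _ ih => exact disjI2 (ih h)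
  | disjE _ _ _ ih ihA ihB =>
      exact disjE (ih h) (ihA (Set.insert_subset_insert h)) (ihB (Set.insert_subset_insert h))
  | implI _ ih => exact implI (ih (Set.insert_subset_insert h))
  | implE _ _ ih₁ ih₂ => exact implE (ih₁ h) (ih₂ h)
  | allI _ ih => exact allI (ih (Set.image_mono h))
  | allE t _ ih => exact allE t (ih h)
  | exI t _ ih => exact exI t (ih h)
  | exE _ _ ih₁ ih₂ => exact exE (ih₁ h) (ih₂ (Set.insert_subset_insert (Set.image_mono h)))
  | efqR he _ ih => exact efqR he (ih h)
  | raaR hr _ ih => exact raaR hr (ih (Set.insert_subset_insert h))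

theorem weaken (d : Deriv e r Γ A) : Deriv e r (insert B Γ) A :=
  d.mono (Set.subset_insert _ _)

theorem weaken₂ (d : Deriv e r (insert A Γ) C) : Deriv e r (insert A (insert B Γ)) C :=
  d.mono (Set.insert_subset_insert (Set.subset_insert _ _))

theorem assume : Deriv e r (insert A Γ) A :=
  hyp (Set.mem_insert _ _)

theorem assume₂ : Deriv e r (insert B (insert A Γ)) A :=
  hyp (Set.mem_insert_of_mem _ (Set.mem_insert _ _))

theorem toNK (d : Deriv e r Γ A) : NK Γ A := by
  induction d with
  | hyp hA => exact hyp hA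
  | topI => exact topI
  | negI _ ih => exact negI ih
  | negE _ _ ih₁ ih₂ => exact negE ih₁ ih₂
  | conjI _ _ ih₁ ih₂ => exact conjI ih₁ ih₂
  | conjE1 _ ih => exact conjE1 ih
  | conjE2 _ ih => exact conjE2 ih
  | disjI1 _ ih => exact disjI1 ih
  | disjI2 _ ih => exact disjI2 ih
  | disjE _ _ _ ih ihA ihB => exact disjE ih ihA ihB
  | implI _ ih => exact implI ih
  | implE _ _ ih₁ ih₂ => exact implE ih₁ ih₂
  | allI _ ih => exact allI ih
  | allE t _ ih => exact allE t ih
  | exI t _ ih => exact exI t ih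
  | exE _ _ ih₁ ih₂ => exact exE ih₁ ih₂
  | efqR _ _ ih => exact raaR rfl (weaken ih)
  | raaR _ _ ih => exact raaR rfl ih

theorem dneg_intro (d : Deriv e r Γ A) : Deriv e r Γ A.dneg :=
  negI (negE assume d.weaken)

theorem bot_of_dneg_bot (d : Deriv e r Γ Formula.bot.dneg) : Deriv e r Γ .bot :=
  negE d (negI assume)

theorem neg_of_dneg_neg (d : Deriv e r Γ A.neg.dneg) : Deriv e r Γ A.neg :=
  negI (negE d.weaken (dneg_intro assume))

theorem dneg_bind (h : Deriv e r Γ A.dneg) (k : Deriv e r (insert A Γ) C.dneg) :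
    Deriv e r Γ C.dneg :=
  negI (negE h.weaken (negI (negE k.weaken₂ assume₂)))

theorem dneg_map (h : Deriv e r Γ A.dneg) (k : Deriv e r (insert A Γ) C) : Deriv e r Γ C.dneg :=
  dneg_bind h (dneg_intro k)

theorem dneg_map₂ (hA : Deriv e r Γ A.dneg) (hB : Deriv e r Γ B.dneg)
    (k : Deriv e r (insert B (insert A Γ)) C) : Deriv e r Γ C.dneg :=
  dneg_bind hA (dneg_map hB.weaken k)

theorem dneg_disj_elim (h : Deriv e r Γ (A.disj B).dneg) (hA : Deriv e r (insert A Γ) C.dneg)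
    (hB : Deriv e r (insert B Γ) C.dneg) : Deriv e r Γ C.dneg :=
  dneg_bind h (disjE assume hA.weaken₂ hB.weaken₂)

theorem dneg_impl_intro (h : Deriv true r (insert A Γ) B.dneg) :
    Deriv true r Γ (A.impl B).dneg := by
  have hnB : Deriv true r (insert (A.impl B).neg Γ) B.neg := negI (negE assume₂ (implI assume₂))
  have hnA : Deriv true r (insert (A.impl B).neg Γ) A.neg := negI (negE h.weaken₂ hnB.weaken)
  exact negI (negE assume (implI (efqR rfl (negE hnA.weaken assume))))

theorem dneg_forall_intro (h : Deriv e r (Formula.lift 0 '' Γ) A.dneg) :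
    Deriv e r Γ A.neg.ex.neg.dneg :=
  dneg_intro (negI (exE assume
    (negE (h.mono ((Set.image_mono (Set.subset_insert _ _)).trans (Set.subset_insert _ _)))
      assume)))

theorem dneg_forall_elim (t : Term) (h : Deriv e r Γ A.neg.ex.neg.dneg) :
    Deriv e r Γ (A.subst 0 t).dneg :=
  negI (negE (neg_of_dneg_neg h).weaken (exI t assume))

theorem dneg_exists_elim (h : Deriv e r Γ A.ex.dneg)
    (k : Deriv e r (insert A (Formula.lift 0 '' Γ)) (C.lift 0).dneg) : Deriv e r Γ C.dneg :=
  dneg_bind h (negI (exE assume₂ (negE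
    (k.mono (Set.insert_subset_insert (Set.image_mono
      ((Set.subset_insert _ _).trans (Set.subset_insert _ _)))))
    (hyp (Set.mem_insert_of_mem _ (Set.mem_image_of_mem _ (Set.mem_insert _ _)))))))

theorem glivenko (d : Deriv e r Γ A) : NJ (Formula.jtr '' Γ) A.jtr.dneg := by
  induction d with
  | hyp hA => exact dneg_intro (hyp (Set.mem_image_of_mem _ hA))
  | topI => exact dneg_intro topI
  | negI _ ih =>
      rw [Set.image_insert_eq] at ih
      exact dneg_intro (negI (bot_of_dneg_bot ih))
  | negE _ _ ih₁ ih₂ => exact dneg_map₂ ih₁ ih₂ (negE assume₂ assume)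
  | conjI _ _ ih₁ ih₂ => exact dneg_map₂ ih₁ ih₂ (conjI assume₂ assume)
  | conjE1 _ ih => exact dneg_map ih (conjE1 assume)
  | conjE2 _ ih => exact dneg_map ih (conjE2 assume)
  | disjI1 _ ih => exact dneg_map ih (disjI1 assume)
  | disjI2 _ ih => exact dneg_map ih (disjI2 assume)
  | disjE _ _ _ ih ihA ihB =>
      rw [Set.image_insert_eq] at ihA ihB
      exact dneg_disj_elim ih ihA ihB
  | implI _ ih =>
      rw [Set.image_insert_eq] at ih
      exact dneg_impl_intro ih
  | implE _ _ ih₁ ih₂ => exact dneg_map₂ ih₁ ih₂ (implE assume₂ assume)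
  | allI _ ih =>
      rw [Formula.image_jtr_image_lift] at ih
      exact dneg_forall_intro ih
  | allE t _ ih =>
      rw [Formula.jtr_subst]
      exact dneg_forall_elim t ih
  | exI t _ ih =>
      rw [Formula.jtr_subst] at ih
      exact dneg_map ih (exI t assume)
  | exE _ _ ih₁ ih₂ =>
      rw [Set.image_insert_eq, Formula.image_jtr_image_lift, Formula.jtr_lift] at ih₂
      exact dneg_exists_elim ih₁ ih₂
  | efqR _ _ ih => exact efqR rfl (bot_of_dneg_bot ih)
  | raaR _ _ ih =>
      rw [Set.image_insert_eq] at ih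
      exact negI (bot_of_dneg_bot ih)

end Deriv

/-- Relative consistency, intuitionistic version. -/
theorem relative_consistency_intuitionistic (Γ : Set Formula)
    (hΓ : ∀ B ∈ Γ, B.forallFree) :
    NK Γ .bot ↔ NJ Γ .bot := by
  refine ⟨fun h => ?_, Deriv.toNK⟩
  have h' := h.glivenko
  rw [Formula.image_jtr_eq_self hΓ] at h'
  exact h'.bot_of_dneg_bot
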